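/- Let γ : ℓ∞ → ℝ be a continuous linear functional which is multiplicative, i.e. γ(x·y) = γ(x)γ(y) for all x, y ∈ ℓ∞ (pointwise product), with γ(𝟙) = 1 and ‖γ‖_{ℓ∞*} = 1. Then for every Banach limit B one has ‖γ − B‖_{ℓ∞*} = 2. -/

import Mathlib

/-!
Cut `ℕ` into the `m` residue classes mod `m`. A Banach limit gives each class the same mass,
hence `1 / m`, since the shift permutes them cyclically. A multiplicative unital functional
takes the value `0` or `1` on each (idempotent) indicator, and the values add up to `1`, so it
gives mass `1` to some class `j`. The test sequence `2 • 𝟙_j - 𝟙` has norm `1` and separates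
the two functionals by `2 - 2 / m`; letting `m → ∞` gives `‖γ - B‖ ≥ 2`, while `‖γ‖ = 1`
and `‖B‖ ≤ 1` give the reverse inequality.
-/

open Filter BoundedContinuousFunction

noncomputable section

/-- `ℓ∞`: the space of bounded real sequences (indexed from `0`). -/
abbrev LInf : Type := BoundedContinuousFunction ℕ ℝ

/-- The translation (shift) operator `T(x₁,x₂,…) = (0,x₁,x₂,…)` (0-indexed). -/
def shift (x : LInf) : LInf :=
  BoundedContinuousFunction.ofNormedAddCommGroup
    (fun n => if n = 0 then 0 else x (n - 1)) continuous_of_discreteTopology ‖x‖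
    (by
      intro n
      rcases n with _ | n
      · simp [norm_nonneg x]
      · simpa using x.norm_coe_le_norm n)

/-- A Banach limit: a positive, normalised, shift-invariant continuous linear
functional on `ℓ∞`. -/
def IsBanachLimit (B : LInf →L[ℝ] ℝ) : Prop :=
  (∀ x : LInf, (∀ n, 0 ≤ x n) → 0 ≤ B x) ∧ B 1 = 1 ∧ ∀ x : LInf, B (shift x) = B x

@[simp] lemma shift_apply (x : LInf) (n : ℕ) : shift x n = if n = 0 then 0 else x (n - 1) := rfl

lemma norm_le_one_of_nonneg_of_map_one {φ : LInf →L[ℝ] ℝ}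
    (hpos : ∀ x : LInf, (∀ n, 0 ≤ x n) → 0 ≤ φ x) (hφ1 : φ 1 = 1) : ‖φ‖ ≤ 1 := by
  refine φ.opNorm_le_bound zero_le_one fun x => ?_
  have hx : ∀ n, |x n| ≤ ‖x‖ := fun n => x.norm_coe_le_norm n
  have hle : 0 ≤ φ (‖x‖ • 1 - x) := hpos _ fun n => by
    simpa using (abs_le.mp (hx n)).2
  have hge : 0 ≤ φ (‖x‖ • 1 + x) := hpos _ fun n => by
    simpa [neg_le_iff_add_nonneg'] using (abs_le.mp (hx n)).1
  rw [map_sub, map_smul, hφ1, smul_eq_mul, mul_one] at hle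
  rw [map_add, map_smul, hφ1, smul_eq_mul, mul_one] at hge
  rw [Real.norm_eq_abs, one_mul, abs_le]
  constructor <;> linarith

lemma IsBanachLimit.norm_le_one {B : LInf →L[ℝ] ℝ} (hB : IsBanachLimit B) : ‖B‖ ≤ 1 :=
  norm_le_one_of_nonneg_of_map_one hB.1 hB.2.1

def residueIndicator (m j : ℕ) : LInf :=
  BoundedContinuousFunction.ofNormedAddCommGroup
    (fun n => if n % m = j then (1 : ℝ) else 0) continuous_of_discreteTopology 1
    (fun n => by split <;> norm_num)

@[simp] lemma residueIndicator_apply (m j n : ℕ) :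
    residueIndicator m j n = if n % m = j then 1 else 0 := rfl

lemma isIdempotentElem_residueIndicator (m j : ℕ) : IsIdempotentElem (residueIndicator m j) := by
  ext n
  simp only [coe_mul, Pi.mul_apply, residueIndicator_apply]
  split <;> norm_num

lemma sum_range_residueIndicator {m : ℕ} (hm : 0 < m) :
    ∑ j ∈ Finset.range m, residueIndicator m j = 1 := by
  ext n
  simp [coe_sum, Finset.sum_apply, Nat.mod_lt n hm]

lemma succ_mod_eq_succ_iff {k m j : ℕ} (hj : j + 1 < m) : (k + 1) % m = j + 1 ↔ k % m = j := by
  have hj₁ : (j + 1) % m = j + 1 := Nat.mod_eq_of_lt hj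
  have hj₀ : j % m = j := Nat.mod_eq_of_lt (by omega)
  calc (k + 1) % m = j + 1 ↔ k + 1 ≡ j + 1 [MOD m] := by rw [Nat.ModEq, hj₁]
    _ ↔ k ≡ j [MOD m] := ⟨Nat.ModEq.add_right_cancel' 1, (·.add_right 1)⟩
    _ ↔ k % m = j := by rw [Nat.ModEq, hj₀]

lemma shift_residueIndicator {m j : ℕ} (hj : j + 1 < m) :
    shift (residueIndicator m j) = residueIndicator m (j + 1) := by
  ext (_ | k)
  · simp
  · simp only [shift_apply, residueIndicator_apply, Nat.add_sub_cancel, if_neg k.succ_ne_zero,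
      succ_mod_eq_succ_iff hj]

lemma IsBanachLimit.apply_residueIndicator {B : LInf →L[ℝ] ℝ} (hB : IsBanachLimit B)
    {m j : ℕ} (hj : j < m) : B (residueIndicator m j) = 1 / m := by
  have hconst : ∀ j < m, B (residueIndicator m j) = B (residueIndicator m 0) := by
    intro j
    induction j with
    | zero => exact fun _ => rfl
    | succ k ih => exact fun hk => by rw [← shift_residueIndicator hk, hB.2.2, ih (by omega)]
  have hsum : ∑ j ∈ Finset.range m, B (residueIndicator m j) = 1 := by
    rw [← map_sum, sum_range_residueIndicator (by omega), hB.2.1]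
  rw [Finset.sum_congr rfl fun j hj => hconst j (Finset.mem_range.mp hj), Finset.sum_const,
    Finset.card_range, nsmul_eq_mul] at hsum
  rw [hconst j hj, eq_div_iff (Nat.cast_ne_zero.mpr (by omega))]
  linarith

lemma exists_apply_residueIndicator_eq_one {γ : LInf →L[ℝ] ℝ}
    (hmul : ∀ x y : LInf, γ (x * y) = γ x * γ y) (hone : γ 1 = 1) {m : ℕ} (hm : 0 < m) :
    ∃ j < m, γ (residueIndicator m j) = 1 := by
  have hsum : ∑ j ∈ Finset.range m, γ (residueIndicator m j) = 1 := by
    rw [← map_sum, sum_range_residueIndicator hm, hone]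
  obtain ⟨j, hj, hj0⟩ : ∃ j ∈ Finset.range m, γ (residueIndicator m j) ≠ 0 := by
    by_contra! h
    rw [Finset.sum_eq_zero h] at hsum
    exact zero_ne_one hsum
  have hidem : IsIdempotentElem (γ (residueIndicator m j)) := by
    rw [IsIdempotentElem, ← hmul, (isIdempotentElem_residueIndicator m j).eq]
  exact ⟨j, Finset.mem_range.mp hj,
    (IsIdempotentElem.iff_eq_zero_or_one.mp hidem).resolve_left hj0⟩

lemma norm_two_smul_residueIndicator_sub_one_le (m j : ℕ) :
    ‖(2 : ℝ) • residueIndicator m j - 1‖ ≤ 1 := by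
  refine (norm_le zero_le_one).mpr fun n => ?_
  simp only [coe_sub, Pi.sub_apply, coe_smul, coe_one, Pi.one_apply,
    residueIndicator_apply, smul_eq_mul]
  split <;> norm_num

lemma two_sub_two_div_le_norm_sub {γ B : LInf →L[ℝ] ℝ}
    (hmul : ∀ x y : LInf, γ (x * y) = γ x * γ y) (hone : γ 1 = 1) (hB : IsBanachLimit B)
    {m : ℕ} (hm : 0 < m) : 2 - 2 / (m : ℝ) ≤ ‖γ - B‖ := by
  obtain ⟨j, hj, hγj⟩ := exists_apply_residueIndicator_eq_one hmul hone hm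
  have hval : (γ - B) ((2 : ℝ) • residueIndicator m j - 1) = 2 - 2 / m := by
    change γ _ - B _ = _
    simp only [map_sub, map_smul, smul_eq_mul, hγj, hone,
      hB.apply_residueIndicator hj, hB.2.1]
    ring
  calc 2 - 2 / (m : ℝ) ≤ ‖(γ - B) ((2 : ℝ) • residueIndicator m j - 1)‖ := by
        rw [hval, Real.norm_eq_abs]
        exact le_abs_self _
    _ ≤ ‖γ - B‖ := (γ - B).unit_le_opNorm _ (norm_two_smul_residueIndicator_sub_one_le m j)

/-- Every multiplicative norm-one unital continuous linear functional on `ℓ∞` is at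
distance `2` from every Banach limit. -/
theorem dist_multiplicative_functional_banach_limit (γ : LInf →L[ℝ] ℝ)
    (hmul : ∀ x y : LInf, γ (x * y) = γ x * γ y) (hone : γ 1 = 1) (hnorm : ‖γ‖ = 1)
    (B : LInf →L[ℝ] ℝ) (hB : IsBanachLimit B) :
    ‖γ - B‖ = 2 := by
  have hupper : ‖γ - B‖ ≤ 2 := by
    calc ‖γ - B‖ ≤ ‖γ‖ + ‖B‖ := norm_sub_le γ B
      _ ≤ 2 := by linarith [hB.norm_le_one]
  have hlim : Tendsto (fun m : ℕ => 2 - 2 / (m : ℝ)) atTop (nhds 2) := by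
    simpa using (tendsto_const_div_atTop_nhds_zero_nat (2 : ℝ)).const_sub 2
  refine le_antisymm hupper (le_of_tendsto hlim ?_)
  filter_upwards [eventually_gt_atTop 0] with m hm
  exact two_sub_two_div_le_norm_sub hmul hone hB hm

end
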